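/- arXiv:1405.0326 — 4 statements merged into one kernel-verified Lean document; each statement's English description precedes it below -/
import Mathlib

section
/- If G₁ and G₂ are forests on the same vertex set V, then there exists a 2-partition f : V → {0,1} such that for every vertex v ∈ V and for each i ∈ {1,2}, the number of neighbors of v in G_i colored 1 and the number colored 0 differ by at most 2. -/
open scoped Classical

noncomputable def bal {α : Type*} (f : α → Fin 2) (S : Finset α) : ℕ :=
  (((S.filter fun x => f x = 1).card : ℤ) - ((S.filter fun x => f x = 0).card : ℤ)).natAbs

open Equiv

private lemma pow_mul_ne {α : Type*} :
    ∀ (n : ℕ) (a b : Equiv.Perm α), a * a = 1 → b * b = 1 →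
    (∀ x, a x ≠ x) → (∀ x, b x ≠ x) → ∀ x, ((a*b)^n) x ≠ b x := by
  intro n
  induction n with
  | zero =>
    intro a b ha hb hfa hfb x h
    simp only [pow_zero, Perm.one_apply] at h
    exact hfb x h.symm
  | succ n ih =>
    intro a b ha hb hfa hfb x h
    have hsc : a * (b*a)^n = (a*b)^n * a := by
      have : SemiconjBy a (b*a) (a*b) := by
        unfold SemiconjBy
        group
      simpa [SemiconjBy] using this.pow_right n
    have hrw : (a*b)^(n+1) = a * (b*a)^n * b := by
      rw [hsc, pow_succ, mul_assoc]
    rw [hrw] at h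
    have h2 : ((b*a)^n) (b x) = a (b x) := by
      have := congrArg a h
      simp only [Perm.mul_apply] at this ⊢
      rw [← Perm.mul_apply a a, ha] at this
      simpa using this
    exact ih b a hb ha hfb hfa (b x) h2

private lemma pow_mul_ne_a {α : Type*} (n : ℕ) (a b : Equiv.Perm α) (ha : a * a = 1)
    (hb : b * b = 1) (hfa : ∀ x, a x ≠ x) (hfb : ∀ x, b x ≠ x) (x : α) :
    ((a*b)^n) x ≠ a x := by
  intro h
  have hsc : a * (a*b)^n = (b*a)^n * a := by
    have : SemiconjBy a (a*b) (b*a) := by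
      unfold SemiconjBy
      rw [← mul_assoc, ha, mul_assoc, ha, one_mul, mul_one]
    simpa [SemiconjBy] using this.pow_right n
  have haa : ∀ y, a (a y) = y := by
    intro y; rw [← Perm.mul_apply, ha, Perm.one_apply]
  have h2 : ((b*a)^n) (a x) = a (a x) := by
    have := congrArg a h
    rw [← Perm.mul_apply, hsc, Perm.mul_apply, haa] at this
    rw [this, haa]
  exact pow_mul_ne n b a hb ha hfb hfa (a x) h2

section
variable {α : Type*} (a b : Equiv.Perm α) (ha : a * a = 1) (hb : b * b = 1)
  (hfa : ∀ x, a x ≠ x) (hfb : ∀ x, b x ≠ x)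

include ha hb hfa hfb in
private lemma not_sameCycle_a (x : α) : ¬ (a*b).SameCycle x (a x) := by
  rintro ⟨i, hi⟩
  rcases le_or_gt 0 i with hpos | hneg
  · lift i to ℕ using hpos
    rw [zpow_natCast] at hi
    exact pow_mul_ne_a i a b ha hb hfa hfb x hi
  · have haa : ∀ y, a (a y) = y := by
      intro y; rw [← Perm.mul_apply, ha, Perm.one_apply]
    have h2 : ((a*b)^(-i)) (a x) = x := by
      rw [← hi, ← Perm.mul_apply, ← zpow_add, neg_add_cancel, zpow_zero, Perm.one_apply]
    obtain ⟨n, hn⟩ : ∃ n : ℕ, -i = (n:ℤ) := ⟨(-i).toNat, by omega⟩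
    rw [hn, zpow_natCast] at h2
    exact pow_mul_ne_a n a b ha hb hfa hfb (a x) (by rw [h2, haa])

include ha hb hfa hfb in
private lemma not_sameCycle_b (x : α) : ¬ (a*b).SameCycle x (b x) := by
  rintro ⟨i, hi⟩
  rcases le_or_gt 0 i with hpos | hneg
  · lift i to ℕ using hpos
    rw [zpow_natCast] at hi
    exact pow_mul_ne i a b ha hb hfa hfb x hi
  · have hbb : ∀ y, b (b y) = y := by
      intro y; rw [← Perm.mul_apply, hb, Perm.one_apply]
    have h2 : ((a*b)^(-i)) (b x) = x := by
      rw [← hi, ← Perm.mul_apply, ← zpow_add, neg_add_cancel, zpow_zero, Perm.one_apply]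
    obtain ⟨n, hn⟩ : ∃ n : ℕ, -i = (n:ℤ) := ⟨(-i).toNat, by omega⟩
    rw [hn, zpow_natCast] at h2
    exact pow_mul_ne n a b ha hb hfa hfb (b x) (by rw [h2, hbb])
end

open scoped Classical in
private lemma exists_two_coloring {α : Type*} (a b : Equiv.Perm α) (ha : a * a = 1)
    (hb : b * b = 1) (hfa : ∀ x, a x ≠ x) (hfb : ∀ x, b x ≠ x) :
    ∃ f : α → Fin 2, ∀ x, f (a x) ≠ f x ∧ f (b x) ≠ f x := by
  set c := a * b with hc
  have haa : ∀ y, a (a y) = y := by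
    intro y; rw [← Perm.mul_apply, ha, Perm.one_apply]
  have hbb : ∀ y, b (b y) = y := by
    intro y; rw [← Perm.mul_apply, hb, Perm.one_apply]
  -- conjugation: a ∘ c^i = c^(-i) ∘ a
  have hconj : ∀ (i : ℤ) (y : α), a ((c^i) y) = (c^(-i)) (a y) := by
    intro i y
    have hs : SemiconjBy a c c⁻¹ := by
      unfold SemiconjBy
      have hbinv : c⁻¹ = b * a := by
        rw [hc]; rw [eq_comm, eq_inv_iff_mul_eq_one]
        calc b * a * (a * b) = b * (a * a) * b := by group
        _ = 1 := by rw [ha, mul_one, hb]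
      rw [hbinv, hc, ← mul_assoc, ha, mul_assoc, ha, one_mul, mul_one]
    have := hs.zpow_right i
    have h2 : a * c^i = c^(-i) * a := by
      simpa [SemiconjBy, inv_zpow, zpow_neg] using this
    rw [← Perm.mul_apply, h2, Perm.mul_apply]
  have himg : ∀ {u v : α}, c.SameCycle u v → c.SameCycle (a u) (a v) := by
    rintro u v ⟨i, hi⟩
    exact ⟨-i, by rw [← hconj, hi]⟩
  -- the component relation
  set R : α → α → Prop := fun x y => c.SameCycle x y ∨ c.SameCycle (a x) y with hR
  have hRrefl : ∀ x, R x x := fun x => Or.inl (Perm.SameCycle.refl c x)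
  have hRsymm : ∀ {x y}, R x y → R y x := by
    rintro x y (h | h)
    · exact Or.inl h.symm
    · right
      have := himg h
      rw [haa] at this
      exact this.symm

  have hRtrans : ∀ {x y z}, R x y → R y z → R x z := by
    rintro x y z (h1 | h1) (h2 | h2)
    · exact Or.inl (h1.trans h2)
    · right
      exact (himg h1).trans h2
    · exact Or.inr (h1.trans h2)
    · left
      have h3 := himg h1
      rw [haa] at h3
      exact h3.trans h2
  let s : Setoid α := ⟨R, hRrefl, fun {x y} => hRsymm, fun {x y z} => hRtrans⟩
  set rep : α → α := fun x => (@Quotient.mk _ s x).out with hrep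
  have hrepR : ∀ x, R (rep x) x := by
    intro x
    have h : @Quotient.mk _ s (rep x) = @Quotient.mk _ s x := Quotient.out_eq _
    exact Quotient.exact h
  have hrepeq : ∀ {x y}, R x y → rep x = rep y := by
    intro x y h
    have h2 : @Quotient.mk _ s x = @Quotient.mk _ s y := Quotient.sound h
    rw [hrep]; simp only [h2]
  refine ⟨fun x => if c.SameCycle (rep x) x then 0 else 1, fun x => ⟨?_, ?_⟩⟩
  · -- f (a x) ≠ f x
    have hxa : rep (a x) = rep x :=
      (hrepeq (Or.inr (Perm.SameCycle.refl c (a x)))).symm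
    show (if c.SameCycle (rep (a x)) (a x) then (0:Fin 2) else 1)
        ≠ (if c.SameCycle (rep x) x then (0:Fin 2) else 1)
    rw [hxa]
    have hrx : R (rep x) x := hrepR x
    have hrax : R (rep x) (a x) := by rw [← hxa]; exact hrepR (a x)
    by_cases h1 : c.SameCycle (rep x) x
    · by_cases h2 : c.SameCycle (rep x) (a x)
      · exact absurd (h2.symm.trans h1).symm (not_sameCycle_a a b ha hb hfa hfb x)
      · rw [if_neg h2, if_pos h1]; exact one_ne_zero
    · by_cases h2 : c.SameCycle (rep x) (a x)
      · rw [if_pos h2, if_neg h1]; exact zero_ne_one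
      · exfalso
        have hA : c.SameCycle (a (rep x)) x := hrx.resolve_left h1
        have hB : c.SameCycle (a (rep x)) (a x) := hrax.resolve_left h2
        exact (not_sameCycle_a a b ha hb hfa hfb x) (hA.symm.trans hB)
  · -- f (b x) ≠ f x
    have hbax : c.SameCycle (b x) (a x) := ⟨1, by simp [hc, Perm.mul_apply, hbb]⟩
    have hxb : rep (b x) = rep x := (hrepeq (Or.inr hbax.symm)).symm
    show (if c.SameCycle (rep (b x)) (b x) then (0:Fin 2) else 1)
        ≠ (if c.SameCycle (rep x) x then (0:Fin 2) else 1)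
    rw [hxb]
    have hrx : R (rep x) x := hrepR x
    have hrbx : R (rep x) (b x) := by rw [← hxb]; exact hrepR (b x)
    by_cases h1 : c.SameCycle (rep x) x
    · by_cases h2 : c.SameCycle (rep x) (b x)
      · exact absurd (h2.symm.trans h1).symm (not_sameCycle_b a b ha hb hfa hfb x)
      · rw [if_neg h2, if_pos h1]; exact one_ne_zero
    · by_cases h2 : c.SameCycle (rep x) (b x)
      · rw [if_pos h2, if_neg h1]; exact zero_ne_one
      · exfalso
        have hA : c.SameCycle (a (rep x)) x := hrx.resolve_left h1
        have hB : c.SameCycle (a (rep x)) (b x) := hrbx.resolve_left h2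
        exact (not_sameCycle_b a b ha hb hfa hfb x) (hA.symm.trans hB)

private noncomputable def doubleInv {V : Type*} (m : V → V) : V ⊕ V → V ⊕ V := fun x =>
  match x with
  | .inl u => if m u = u then .inr u else .inl (m u)
  | .inr u => if m u = u then .inl u else .inr (m u)

private lemma doubleInv_apply_inl {V : Type*} (m : V → V) (u : V) :
    doubleInv m (.inl u) = if m u = u then .inr u else .inl (m u) := rfl

private lemma doubleInv_apply_inr {V : Type*} (m : V → V) (u : V) :
    doubleInv m (.inr u) = if m u = u then .inl u else .inr (m u) := rfl

private lemma doubleInv_involutive {V : Type*} (m : V → V) (hm : ∀ u, m (m u) = u) :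
    Function.Involutive (doubleInv m) := by
  intro x
  have hne : ∀ u : V, m u ≠ u → m (m u) ≠ m u := by
    intro u h e
    exact h (((hm u).symm.trans e).symm)
  rcases x with u | u
  · by_cases h : m u = u
    · rw [doubleInv_apply_inl, if_pos h, doubleInv_apply_inr, if_pos h]
    · rw [doubleInv_apply_inl, if_neg h, doubleInv_apply_inl, if_neg (hne u h), hm u]
  · by_cases h : m u = u
    · rw [doubleInv_apply_inr, if_pos h, doubleInv_apply_inl, if_pos h]
    · rw [doubleInv_apply_inr, if_neg h, doubleInv_apply_inr, if_neg (hne u h), hm u]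

private lemma doubleInv_ne {V : Type*} (m : V → V) (x : V ⊕ V) : doubleInv m x ≠ x := by
  rcases x with u | u <;> by_cases h : m u = u <;>
    simp [doubleInv, h]

private lemma exists_coloring_of_involutions {V : Type*} (m₁ m₂ : V → V)
    (h₁ : ∀ u, m₁ (m₁ u) = u) (h₂ : ∀ u, m₂ (m₂ u) = u) :
    ∃ f : V → Fin 2, ∀ u, (m₁ u ≠ u → f (m₁ u) ≠ f u) ∧ (m₂ u ≠ u → f (m₂ u) ≠ f u) := by
  set a : Equiv.Perm (V ⊕ V) := (doubleInv_involutive m₁ h₁).toPerm _ with hadef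
  set b : Equiv.Perm (V ⊕ V) := (doubleInv_involutive m₂ h₂).toPerm _ with hbdef
  have haapp : ∀ x, a x = doubleInv m₁ x := fun x => rfl
  have hbapp : ∀ x, b x = doubleInv m₂ x := fun x => rfl
  obtain ⟨f, hf⟩ := exists_two_coloring a b
    (by ext x; simp [haapp, doubleInv_involutive m₁ h₁ x])
    (by ext x; simp [hbapp, doubleInv_involutive m₂ h₂ x])
    (fun x => by rw [haapp]; exact doubleInv_ne m₁ x)
    (fun x => by rw [hbapp]; exact doubleInv_ne m₂ x)
  refine ⟨fun u => f (.inl u), fun u => ⟨fun hne => ?_, fun hne => ?_⟩⟩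
  · have h3 := (hf (.inl u)).1
    rw [haapp, doubleInv_apply_inl, if_neg hne] at h3
    exact h3
  · have h3 := (hf (.inl u)).2
    rw [hbapp, doubleInv_apply_inl, if_neg hne] at h3
    exact h3

private lemma exists_pairing {V : Type*} (s : Finset V) :
    ∃ m : V → V, (∀ u, m (m u) = u) ∧ (∀ u, u ∉ s → m u = u) ∧ (∀ u ∈ s, m u ∈ s) ∧
      (s.filter (fun u => m u = u)).card ≤ 1 := by
  induction s using Finset.strongInduction with
  | _ s ih =>
    by_cases hcard : s.card ≤ 1
    · refine ⟨id, fun u => rfl, fun u _ => rfl, fun u hu => hu, ?_⟩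
      exact le_trans (Finset.card_le_card (Finset.filter_subset _ _)) hcard
    · have hcard2 : 1 < s.card := by omega
      obtain ⟨a, ha, b, hb, hab⟩ := Finset.one_lt_card.mp hcard2
      have hsub : ({a, b} : Finset V) ⊆ s := by
        intro x hx
        simp only [Finset.mem_insert, Finset.mem_singleton] at hx
        rcases hx with rfl | rfl <;> assumption
      have hss : s \ {a, b} ⊂ s := Finset.sdiff_ssubset hsub ⟨a, Finset.mem_insert_self _ _⟩
      obtain ⟨m', hm'inv, hm'out, hm'mem, hm'fix⟩ := ih _ hss
      set m : V → V := fun u => if u = a then b else if u = b then a else m' u with hm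
      have hma : m a = b := by simp [hm]
      have hmb : m b = a := by simp [hm, hab.symm]
      have hmo : ∀ u, u ≠ a → u ≠ b → m u = m' u := by
        intro u h1 h2; simp [hm, h1, h2]
      have hnotin : ∀ u, u ∉ s \ {a, b} → u = a ∨ u = b ∨ m u = u := by
        intro u hu
        by_cases h1 : u = a
        · exact Or.inl h1
        by_cases h2 : u = b
        · exact Or.inr (Or.inl h2)
        right; right
        rw [hmo u h1 h2]
        apply hm'out
        exact hu
      have hm'ab : ∀ u, u ∈ s \ {a, b} → m' u ≠ a ∧ m' u ≠ b := by
        intro u hu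
        have := hm'mem u hu
        simp only [Finset.mem_sdiff, Finset.mem_insert, Finset.mem_singleton] at this
        exact ⟨fun h => this.2 (Or.inl h), fun h => this.2 (Or.inr h)⟩
      refine ⟨m, ?_, ?_, ?_, ?_⟩
      · intro u
        by_cases h1 : u = a
        · rw [h1, hma, hmb]
        by_cases h2 : u = b
        · rw [h2, hmb, hma]
        rw [hmo u h1 h2]
        by_cases h3 : u ∈ s \ {a, b}
        · obtain ⟨hA, hB⟩ := hm'ab u h3
          rw [hmo _ hA hB, hm'inv]
        · rw [hm'out u h3, hmo u h1 h2, hm'out u h3]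
      · intro u hu
        have h1 : u ≠ a := fun h => hu (h ▸ ha)
        have h2 : u ≠ b := fun h => hu (h ▸ hb)
        rw [hmo u h1 h2]
        apply hm'out
        simp only [Finset.mem_sdiff]
        exact fun h => hu h.1
      · intro u hu
        by_cases h1 : u = a
        · rw [h1, hma]; exact hb
        by_cases h2 : u = b
        · rw [h2, hmb]; exact ha
        rw [hmo u h1 h2]
        by_cases h3 : u ∈ s \ {a, b}
        · exact (Finset.mem_sdiff.mp (hm'mem u h3)).1
        · rw [hm'out u h3]; exact hu
      · calc (s.filter (fun u => m u = u)).card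
            ≤ ((s \ {a, b}).filter (fun u => m' u = u)).card := by
              apply Finset.card_le_card
              intro u hu
              simp only [Finset.mem_filter] at hu ⊢
              obtain ⟨hus, hufix⟩ := hu
              have h1 : u ≠ a := fun h => by rw [h, hma] at hufix; exact hab hufix.symm
              have h2 : u ≠ b := fun h => by rw [h, hmb] at hufix; exact hab hufix
              refine ⟨Finset.mem_sdiff.mpr ⟨hus, ?_⟩, ?_⟩
              · simp only [Finset.mem_insert, Finset.mem_singleton]
                push_neg
                exact ⟨h1, h2⟩
              · rw [← hmo u h1 h2]; exact hufix
        _ ≤ 1 := hm'fix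

private lemma exists_matching {V : Type*} [Fintype V] (p : V → Option V) :
    ∃ m : V → V, (∀ u, m (m u) = u) ∧ (∀ u, m u ≠ u → p (m u) = p u) ∧
      (∀ v : V, (Finset.univ.filter (fun u => p u = some v ∧ m u = u)).card ≤ 1) := by
  set B : V → Finset V := fun v => Finset.univ.filter (fun u => p u = some v) with hB
  have hchoice : ∀ v : V, ∃ m : V → V, (∀ u, m (m u) = u) ∧ (∀ u, u ∉ B v → m u = u) ∧
      (∀ u ∈ B v, m u ∈ B v) ∧ ((B v).filter (fun u => m u = u)).card ≤ 1 :=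
    fun v => exists_pairing (B v)
  set mv : V → V → V := fun v => (hchoice v).choose with hmv
  have hmvspec : ∀ v, _ := fun v => (hchoice v).choose_spec
  set m : V → V := fun u => (p u).elim u (fun v => mv v u) with hm
  have hmem : ∀ v u, u ∈ B v ↔ p u = some v := by
    intro v u; simp [hB]
  have happ : ∀ u v, p u = some v → m u = mv v u := by
    intro u v h; simp [hm, h]
  have happn : ∀ u, p u = none → m u = u := by
    intro u h; simp [hm, h]
  have hmemv : ∀ u v, p u = some v → m u ∈ B v := by
    intro u v h
    rw [happ u v h]
    exact (hmvspec v).2.2.1 u ((hmem v u).mpr h)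
  refine ⟨m, ?_, ?_, ?_⟩
  · intro u
    rcases h : p u with _ | v
    · rw [happn u h, happn u h]
    · have h2 : m u ∈ B v := hmemv u v h
      rw [happ u v h] at h2 ⊢
      rw [happ _ v ((hmem v _).mp h2)]
      exact (hmvspec v).1 u
  · intro u hne
    rcases h : p u with _ | v
    · exact absurd (happn u h) hne
    · exact (hmem v (m u)).mp (hmemv u v h)
  · intro v
    calc (Finset.univ.filter (fun u => p u = some v ∧ m u = u)).card
        ≤ ((B v).filter (fun u => mv v u = u)).card := by
          apply Finset.card_le_card
          intro u hu
          simp only [Finset.mem_filter, Finset.mem_univ, true_and] at hu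
          obtain ⟨h1, h2⟩ := hu
          rw [Finset.mem_filter]
          exact ⟨(hmem v u).mpr h1, by rw [← happ u v h1]; exact h2⟩
      _ ≤ 1 := (hmvspec v).2.2.2

private lemma exists_parent {V : Type*} (G : SimpleGraph V) (hG : G.IsAcyclic) :
    ∃ p : V → Option V, (∀ u v, p u = some v → G.Adj u v) ∧
      (∀ u v, G.Adj u v → p u = some v ∨ p v = some u) := by
  have huniq := SimpleGraph.isAcyclic_iff_path_unique.mp hG
  set root : V → V := fun u => (G.connectedComponentMk u).out with hroot
  have hreach : ∀ u, G.Reachable u (root u) := by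
    intro u
    apply SimpleGraph.ConnectedComponent.exact
    exact (Quot.out_eq _).symm
  set P : (u : V) → G.Path u (root u) := fun u => ((hreach u).some).toPath with hP
  set pr : V → Option V := fun u =>
    if u = root u then none else some ((P u).val.getVert 1) with hpr
  have hprn : ∀ u, u = root u → pr u = none := fun u h => by
    simp only [hpr]; rw [if_pos h]
  have hprs : ∀ u, u ≠ root u → pr u = some ((P u).val.getVert 1) := fun u h => by
    simp only [hpr, if_neg h]
  have hadj : ∀ u v, pr u = some v → G.Adj u v := by
    intro u v h
    by_cases hu : u = root u
    · rw [hprn u hu] at h; exact absurd h (by simp)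
    · rw [hprs u hu] at h
      have h2 : ¬ (P u).val.Nil := SimpleGraph.Walk.not_nil_of_ne hu
      have h3 := SimpleGraph.Walk.adj_snd h2
      exact (Option.some_inj.mp h) ▸ h3
  refine ⟨pr, hadj, ?_⟩
  intro u v huv
  have hc : root u = root v := by
    have hcc : G.connectedComponentMk u = G.connectedComponentMk v :=
      SimpleGraph.ConnectedComponent.sound huv.reachable
    rw [hroot]; simp only [hcc]
  by_cases hu : u = root u
  · right
    have hrv : root v = u := by rw [← hc, ← hu]
    subst hrv
    have hv : v ≠ root v := huv.ne'
    rw [hprs v hv]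
    have hsing : P v = SimpleGraph.Path.singleton huv.symm := huniq _ _
    rw [hsing]
    rfl
  · by_cases hv : v = root v
    · left
      have hru : root u = v := by rw [hc, ← hv]
      subst hru
      rw [hprs u hu]
      have hsing : P u = SimpleGraph.Path.singleton huv := huniq _ _
      rw [hsing]
      rfl
    · by_cases h2 : (P u).val.getVert 1 = v
      · left; rw [hprs u hu, h2]
      · right
        have hnsup : v ∉ (P u).val.support := by
          intro hsup
          have ht : ((P u).val.takeUntil v hsup).IsPath := (P u).prop.takeUntil hsup
          have hts : (⟨_, ht⟩ : G.Path u v) = SimpleGraph.Path.singleton huv := huniq _ _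
          have htw : (P u).val.takeUntil v hsup = SimpleGraph.Walk.cons huv SimpleGraph.Walk.nil :=
            congrArg Subtype.val hts
          have hspec := (P u).val.take_spec hsup
          rw [htw] at hspec
          apply h2
          rw [← hspec]
          rw [SimpleGraph.Walk.cons_nil_append]
          rw [SimpleGraph.Walk.getVert_cons_succ, SimpleGraph.Walk.getVert_zero]
        have hW : (SimpleGraph.Walk.cons huv.symm (P u).val).IsPath :=
          SimpleGraph.Walk.IsPath.cons (P u).prop hnsup
        have hWc : ((SimpleGraph.Walk.cons huv.symm (P u).val).copy rfl hc).IsPath := by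
          rw [SimpleGraph.Walk.isPath_copy]; exact hW
        have heq : P v = ⟨_, hWc⟩ := huniq _ _
        rw [hprs v hv]
        congr 1
        rw [congrArg Subtype.val heq]
        rw [SimpleGraph.Walk.getVert_copy]
        rw [SimpleGraph.Walk.getVert_cons_succ, SimpleGraph.Walk.getVert_zero]

private lemma bal_le_one {V : Type*} (f : V → Fin 2) (s : Finset V) (m : V → V)
    (hinv : ∀ u, m (m u) = u) (hmem : ∀ u ∈ s, m u ∈ s)
    (hcol : ∀ u, m u ≠ u → f (m u) ≠ f u)
    (hfix : (s.filter (fun u => m u = u)).card ≤ 1) :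
    bal f s ≤ 1 := by
  set s1 := s.filter (fun x => f x = 1) with hs1
  set s0 := s.filter (fun x => f x = 0) with hs0
  set F := s.filter (fun u => m u = u) with hF
  have hfin2 : ∀ x : Fin 2, x ≠ 1 → x = 0 := by decide
  have hfin2' : ∀ x : Fin 2, x ≠ 0 → x = 1 := by decide
  have hbij : (s1 \ F).card = (s0 \ F).card := by
    apply Finset.card_bij' (i := fun u _ => m u) (j := fun u _ => m u)
    · intro a ha
      simp only [hs1, hs0, hF, Finset.mem_sdiff, Finset.mem_filter] at ha ⊢
      obtain ⟨⟨has, haf⟩, hnf⟩ := ha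
      have hne : m a ≠ a := fun e => hnf ⟨has, e⟩
      have hx := hcol a hne
      rw [haf] at hx
      refine ⟨⟨hmem a has, hfin2 _ hx⟩, ?_⟩
      intro ⟨_, e⟩
      exact hne ((hinv a).symm.trans e).symm
    · intro a ha
      simp only [hs1, hs0, hF, Finset.mem_sdiff, Finset.mem_filter] at ha ⊢
      obtain ⟨⟨has, haf⟩, hnf⟩ := ha
      have hne : m a ≠ a := fun e => hnf ⟨has, e⟩
      have hx := hcol a hne
      rw [haf] at hx
      refine ⟨⟨hmem a has, hfin2' _ hx⟩, ?_⟩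
      intro ⟨_, e⟩
      exact hne ((hinv a).symm.trans e).symm
    · intro a _; exact hinv a
    · intro a _; exact hinv a
  have h1 : (s1 ∩ F).card + (s1 \ F).card = s1.card := Finset.card_inter_add_card_sdiff s1 F
  have h0 : (s0 ∩ F).card + (s0 \ F).card = s0.card := Finset.card_inter_add_card_sdiff s0 F
  have hsum : (s1 ∩ F).card + (s0 ∩ F).card ≤ F.card := by
    have hd : Disjoint (s1 ∩ F) (s0 ∩ F) := by
      rw [Finset.disjoint_left]
      intro x hx1 hx0
      simp only [hs1, hs0, Finset.mem_inter, Finset.mem_filter] at hx1 hx0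
      rw [hx1.1.2] at hx0
      exact absurd hx0.1.2 (by decide)
    calc (s1 ∩ F).card + (s0 ∩ F).card = ((s1 ∩ F) ∪ (s0 ∩ F)).card :=
          (Finset.card_union_of_disjoint hd).symm
      _ ≤ F.card := Finset.card_le_card (by
          apply Finset.union_subset <;> exact Finset.inter_subset_right)
  unfold bal
  rw [← hs1, ← hs0]
  omega

private lemma bal_le_add {V : Type*} (f : V → Fin 2) (C N : Finset V) (hCN : C ⊆ N)
    (h1 : bal f C ≤ 1) (h2 : (N \ C).card ≤ 1) : bal f N ≤ 2 := by
  have hsplit : C ∪ (N \ C) = N := Finset.union_sdiff_of_subset hCN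
  have hd : Disjoint C (N \ C) := Finset.disjoint_sdiff
  have e1 : (N.filter fun x => f x = 1).card
      = (C.filter fun x => f x = 1).card + ((N \ C).filter fun x => f x = 1).card := by
    conv_lhs => rw [← hsplit]
    rw [Finset.filter_union, Finset.card_union_of_disjoint
      (Finset.disjoint_filter_filter hd)]
  have e0 : (N.filter fun x => f x = 0).card
      = (C.filter fun x => f x = 0).card + ((N \ C).filter fun x => f x = 0).card := by
    conv_lhs => rw [← hsplit]
    rw [Finset.filter_union, Finset.card_union_of_disjoint
      (Finset.disjoint_filter_filter hd)]
  have hr1 : ((N \ C).filter fun x => f x = 1).card ≤ (N \ C).card :=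
    Finset.card_le_card (Finset.filter_subset _ _)
  have hr0 : ((N \ C).filter fun x => f x = 0).card ≤ (N \ C).card :=
    Finset.card_le_card (Finset.filter_subset _ _)
  unfold bal at h1 ⊢
  omega

private lemma bal_neighbor {V : Type*} [Fintype V] (G : SimpleGraph V) (p : V → Option V)
    (hadj : ∀ u v, p u = some v → G.Adj u v)
    (hcov : ∀ u v, G.Adj u v → p u = some v ∨ p v = some u)
    (m : V → V) (hinv : ∀ u, m (m u) = u) (hmp : ∀ u, m u ≠ u → p (m u) = p u)
    (hfix : ∀ w : V, (Finset.univ.filter (fun u => p u = some w ∧ m u = u)).card ≤ 1)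
    (f : V → Fin 2) (hf : ∀ u, m u ≠ u → f (m u) ≠ f u) (v : V) :
    bal f (G.neighborFinset v) ≤ 2 := by
  set C : Finset V := Finset.univ.filter (fun u => p u = some v) with hC
  set N := G.neighborFinset v with hN
  have hCmem : ∀ u, u ∈ C ↔ p u = some v := by intro u; simp [hC]
  have hCN : C ⊆ N := by
    intro u hu
    rw [hCmem] at hu
    rw [hN, SimpleGraph.mem_neighborFinset]
    exact (hadj u v hu).symm
  have hR : (N \ C).card ≤ 1 := by
    rw [Finset.card_le_one]
    intro a ha b hb
    simp only [hN, hC, Finset.mem_sdiff, SimpleGraph.mem_neighborFinset, Finset.mem_filter,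
      Finset.mem_univ, true_and] at ha hb
    have h1 : p v = some a := (hcov a v ha.1.symm).resolve_left ha.2
    have h2 : p v = some b := (hcov b v hb.1.symm).resolve_left hb.2
    exact Option.some_inj.mp (h1.symm.trans h2)
  have hCC : ∀ u ∈ C, m u ∈ C := by
    intro u hu
    rw [hCmem] at hu ⊢
    by_cases h : m u = u
    · rw [h]; exact hu
    · rw [hmp u h]; exact hu
  have hfixC : (C.filter (fun u => m u = u)).card ≤ 1 := by
    have he : C.filter (fun u => m u = u)
        = Finset.univ.filter (fun u => p u = some v ∧ m u = u) := by
      rw [hC, Finset.filter_filter]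
    rw [he]; exact hfix v
  exact bal_le_add f C N hCN (bal_le_one f C m hinv hCC hf hfixC) hR

/-- Two forests on a common vertex set admit a simultaneous 2-locally-balanced
2-partition of the vertices. -/
theorem simultaneous_two_locally_balanced {V : Type*} [Fintype V]
    (G₁ G₂ : SimpleGraph V) (h₁ : G₁.IsAcyclic) (h₂ : G₂.IsAcyclic) :
    ∃ f : V → Fin 2, ∀ v : V,
      bal f (G₁.neighborFinset v) ≤ 2 ∧ bal f (G₂.neighborFinset v) ≤ 2 := by
  obtain ⟨p₁, hp₁adj, hp₁cov⟩ := exists_parent G₁ h₁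
  obtain ⟨p₂, hp₂adj, hp₂cov⟩ := exists_parent G₂ h₂
  obtain ⟨m₁, hm₁inv, hm₁p, hm₁fix⟩ := exists_matching p₁
  obtain ⟨m₂, hm₂inv, hm₂p, hm₂fix⟩ := exists_matching p₂
  obtain ⟨f, hf⟩ := exists_coloring_of_involutions m₁ m₂ hm₁inv hm₂inv
  refine ⟨f, fun v => ⟨?_, ?_⟩⟩
  · exact bal_neighbor G₁ p₁ hp₁adj hp₁cov m₁ hm₁inv hm₁p hm₁fix f (fun u => (hf u).1) v
  · exact bal_neighbor G₂ p₂ hp₂adj hp₂cov m₂ hm₂inv hm₂p hm₂fix f (fun u => (hf u).2) v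
end

section
/- There exist two trees G₁ and G₂ on the same 5-element vertex set such that no 2-partition f of the vertex set satisfies b_f(γ_{G_i}(v)) ≤ 1 for all vertices v and both i ∈ {1,2}. Concretely, take V = {v₁,...,v₅}, G₁ the path v₁v₂v₃v₄v₅ and G₂ the path v₃v₂v₁v₅v₄. -/
open scoped Classical

noncomputable def G₁ : SimpleGraph (Fin 5) :=
  SimpleGraph.fromEdgeSet {s(0,1), s(1,2), s(2,3), s(3,4)}

noncomputable def G₂ : SimpleGraph (Fin 5) :=
  SimpleGraph.fromEdgeSet {s(0,4), s(4,3), s(2,1), s(1,0)}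

/-!
Both graphs are paths on five vertices, `G₂` being a relabelled copy of `G₁`, hence trees.
A vertex with exactly two neighbours `a ≠ b` has balance at most `1` only if `f a ≠ f b`.
The vertices of degree two in `G₁` and `G₂` thus force `f` to properly 2-colour the
5-cycle `0 – 2 – 4 – 1 – 3 – 0`, which is impossible since the cycle is odd.
-/

open SimpleGraph

theorem ne_of_bal_pair_lt_two {α : Type*} [DecidableEq α] (f : α → Fin 2) {a b : α}
    (hab : a ≠ b) (h : bal f {a, b} < 2) : f a ≠ f b := by
  intro hfab
  rcases Fin.exists_fin_two.mp ⟨f a, rfl⟩ with ha | ha <;>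
    simp [bal, Finset.filter_insert, Finset.filter_singleton, ha, ← hfab, hab] at h

def pathGraphEdge (n : ℕ) (i : Fin n) : (pathGraph (n + 1)).edgeSet :=
  ⟨s(i.castSucc, i.succ), by simp [pathGraph_adj]⟩

theorem bijective_pathGraphEdge (n : ℕ) : Function.Bijective (pathGraphEdge n) := by
  constructor
  · intro i j hij
    simp only [pathGraphEdge, Subtype.mk.injEq, Sym2.eq_iff, Fin.ext_iff, Fin.val_castSucc,
      Fin.val_succ] at hij
    ext; omega
  · rintro ⟨e, he⟩
    induction e using Sym2.ind with
    | _ u v =>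
      rw [mem_edgeSet, pathGraph_adj] at he
      rcases he with h | h
      · exact ⟨⟨u, by omega⟩, by simp [pathGraphEdge, Fin.ext_iff]; omega⟩
      · exact ⟨⟨v, by omega⟩, by simp [pathGraphEdge, Fin.ext_iff]; omega⟩

theorem isTree_pathGraph (n : ℕ) : (pathGraph (n + 1)).IsTree := by
  rw [isTree_iff_connected_and_card]
  refine ⟨pathGraph_connected n, ?_⟩
  rw [← Nat.card_eq_of_bijective _ (bijective_pathGraphEdge n)]
  simp

theorem G₁_eq_pathGraph : G₁ = pathGraph 5 := by
  ext a b
  simp only [G₁, fromEdgeSet_adj, Set.mem_insert_iff, Set.mem_singleton_iff, pathGraph_adj]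
  fin_cases a <;> fin_cases b <;> simp

/-- Sends each vertex to its position along the path `2 – 1 – 0 – 4 – 3`. -/
def G₂Relabel : Equiv.Perm (Fin 5) := Equiv.swap 0 2 * Equiv.swap 3 4

theorem G₂_eq_comap_pathGraph : G₂ = (pathGraph 5).comap G₂Relabel := by
  ext a b
  simp only [G₂, fromEdgeSet_adj, Set.mem_insert_iff, Set.mem_singleton_iff, comap_adj,
    pathGraph_adj]
  fin_cases a <;> fin_cases b <;> simp [G₂Relabel] <;> decide

theorem G₁_neighborFinset_one : G₁.neighborFinset 1 = {0, 2} := by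
  ext a
  simp only [mem_neighborFinset, G₁_eq_pathGraph, pathGraph_adj]
  fin_cases a <;> simp

theorem G₁_neighborFinset_two : G₁.neighborFinset 2 = {1, 3} := by
  ext a
  simp only [mem_neighborFinset, G₁_eq_pathGraph, pathGraph_adj]
  fin_cases a <;> simp

theorem G₁_neighborFinset_three : G₁.neighborFinset 3 = {2, 4} := by
  ext a
  simp only [mem_neighborFinset, G₁_eq_pathGraph, pathGraph_adj]
  fin_cases a <;> simp

theorem G₂_neighborFinset_zero : G₂.neighborFinset 0 = {1, 4} := by
  ext a
  simp only [mem_neighborFinset, G₂_eq_comap_pathGraph, comap_adj, pathGraph_adj]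
  fin_cases a <;> simp [G₂Relabel] <;> decide

theorem G₂_neighborFinset_four : G₂.neighborFinset 4 = {0, 3} := by
  ext a
  simp only [mem_neighborFinset, G₂_eq_comap_pathGraph, comap_adj, pathGraph_adj]
  fin_cases a <;> simp [G₂Relabel] <;> decide

/-- The two specific paths `v₁v₂v₃v₄v₅` and `v₃v₂v₁v₅v₄` are trees on the same 5
vertices admitting no simultaneous 1-locally-balanced 2-partition. -/
theorem no_one_locally_balanced :
    G₁.Connected ∧ G₁.IsAcyclic ∧ G₂.Connected ∧ G₂.IsAcyclic ∧
    ∀ f : Fin 5 → Fin 2, ∃ v : Fin 5,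
      2 ≤ bal f (G₁.neighborFinset v) ∨ 2 ≤ bal f (G₂.neighborFinset v) := by
  have hG₁ : G₁.IsTree := G₁_eq_pathGraph ▸ isTree_pathGraph 4
  have hG₂ : G₂.IsTree :=
    G₂_eq_comap_pathGraph ▸ (Iso.comap G₂Relabel _).isTree_iff.mpr (isTree_pathGraph 4)
  refine ⟨hG₁.connected, hG₁.isAcyclic, hG₂.connected, hG₂.isAcyclic, fun f => ?_⟩
  by_contra! hf
  have h02 := ne_of_bal_pair_lt_two f (by decide) (G₁_neighborFinset_one ▸ (hf 1).1)
  have h13 := ne_of_bal_pair_lt_two f (by decide) (G₁_neighborFinset_two ▸ (hf 2).1)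
  have h24 := ne_of_bal_pair_lt_two f (by decide) (G₁_neighborFinset_three ▸ (hf 3).1)
  have h14 := ne_of_bal_pair_lt_two f (by decide) (G₂_neighborFinset_zero ▸ (hf 0).2)
  have h03 := ne_of_bal_pair_lt_two f (by decide) (G₂_neighborFinset_four ▸ (hf 4).2)
  omega
end

section
/- Let G₁, G₂ be forests on a common vertex set V. Suppose φ is a 2-coloring of the edges of the bipartite multigraph H(G₁,G₂) (whose edges correspond bijectively to V via ξ) such that at every vertex of H(G₁,G₂) the two color classes among incident edges differ in size by at most 1. Then the induced vertex 2-partition F(v) = φ(ξ(v)) satisfies b_F(γ_{G_i}(v)) ≤ 2 for every v ∈ V and i ∈ {1,2}. -/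
open scoped Classical

noncomputable def childrenF {V : Type*} [Fintype V] (G : SimpleGraph V) (rt : V → V) (u : V) :
    Finset V :=
  Finset.univ.filter fun w => G.Adj u w ∧ G.dist (rt w) w = G.dist (rt u) u + 1

noncomputable def classesF {V : Type*} [Fintype V] (G : SimpleGraph V) (rt : V → V) :
    Set (Finset V) :=
  {A | (∃ v : V, A = {rt v}) ∨ ∃ u : V, A = childrenF G rt u ∧ (childrenF G rt u).Nonempty}

lemma bal_eq_sum {α : Type*} (f : α → Fin 2) (S : Finset α) :
    bal f S = (∑ x ∈ S, (if f x = 1 then (1 : ℤ) else -1)).natAbs := by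
  classical
  have h0 : S.filter (fun x => f x = 0) = S.filter (fun x => ¬ f x = 1) := by
    apply Finset.filter_congr
    intro x _
    constructor
    · intro h; simp [h]
    · intro h; omega
  rw [bal, h0, Finset.sum_ite, Finset.sum_const, Finset.sum_const]
  simp [sub_eq_add_neg]

lemma bal_le_of_subset {α : Type*} [DecidableEq α] (f : α → Fin 2) {A S : Finset α}
    (hAS : A ⊆ S) : bal f S ≤ bal f A + (S \ A).card := by
  rw [bal_eq_sum f S, bal_eq_sum f A, ← Finset.sum_sdiff hAS]
  calc (∑ x ∈ S \ A, (if f x = 1 then (1:ℤ) else -1) +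
          ∑ x ∈ A, (if f x = 1 then (1:ℤ) else -1)).natAbs
      ≤ (∑ x ∈ S \ A, (if f x = 1 then (1:ℤ) else -1)).natAbs +
          (∑ x ∈ A, (if f x = 1 then (1:ℤ) else -1)).natAbs := Int.natAbs_add_le _ _
    _ ≤ (S \ A).card + (∑ x ∈ A, (if f x = 1 then (1:ℤ) else -1)).natAbs := by
        gcongr
        have habs : |∑ x ∈ S \ A, (if f x = 1 then (1:ℤ) else -1)| ≤ ((S \ A).card : ℤ) := by
          calc |∑ x ∈ S \ A, (if f x = 1 then (1:ℤ) else -1)|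
              ≤ ∑ x ∈ S \ A, |if f x = 1 then (1:ℤ) else -1| := Finset.abs_sum_le_sum_abs _ _
            _ = ((S \ A).card : ℤ) := by
                rw [Finset.card_eq_sum_ones]
                push_cast
                apply Finset.sum_congr rfl
                intro x _
                split <;> simp
        rw [Int.abs_eq_natAbs] at habs
        exact_mod_cast habs
    _ = (∑ x ∈ A, (if f x = 1 then (1:ℤ) else -1)).natAbs + (S \ A).card := add_comm _ _

lemma card_nonchild_le_one {V : Type*} [Fintype V]
    (G : SimpleGraph V) (hG : G.IsAcyclic) (rt : V → V)
    (hr : ∀ v, G.Reachable v (rt v)) (hc : ∀ v w, G.Reachable v w → rt v = rt w)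
    (v : V) : (G.neighborFinset v \ childrenF G rt v).card ≤ 1 := by
  classical
  rw [Finset.card_le_one]
  intro a ha b hb
  simp only [Finset.mem_sdiff, SimpleGraph.mem_neighborFinset, childrenF,
    Finset.mem_filter, Finset.mem_univ, true_and, not_and] at ha hb
  obtain ⟨hva, hda⟩ := ha
  obtain ⟨hvb, hdb⟩ := hb
  set r := rt v with hrv
  have hra : rt a = r := (hc v a hva.reachable).symm
  have hrb : rt b = r := (hc v b hvb.reachable).symm
  have hreach : G.Reachable r v := (hr v).symm
  -- distances
  have key : ∀ w : V, G.Adj v w → ¬ (G.dist (rt w) w = G.dist r v + 1) →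
      G.dist r w ≤ G.dist r v := by
    intro w hvw hne
    have hrw : rt w = r := (hc v w hvw.reachable).symm
    rw [hrw] at hne
    obtain ⟨p, hp, hlen⟩ := hreach.exists_path_of_dist
    have : G.dist r w ≤ G.dist r v + 1 := by
      have := SimpleGraph.dist_le (p.concat hvw)
      rwa [SimpleGraph.Walk.length_concat, hlen] at this
    omega
  have hdista : G.dist r a ≤ G.dist r v := key a hva (hda hva)
  have hdistb : G.dist r b ≤ G.dist r v := key b hvb (hdb hvb)
  -- build two paths from v to r
  have build : ∀ w : V, G.Adj v w → G.dist r w ≤ G.dist r v →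
      ∃ q : G.Walk v r, q.IsPath ∧ q.getVert 1 = w := by
    intro w hvw hd
    have hrww : rt w = r := (hc v w hvw.reachable).symm
    have hrw : G.Reachable r w := (hrww ▸ hr w).symm
    obtain ⟨p, hp, hlen⟩ := hrw.exists_path_of_dist
    have hvns : v ∉ p.support := by
      intro hmem
      have h1 : G.dist r v ≤ (p.takeUntil v hmem).length :=
        SimpleGraph.dist_le _
      have h2 : G.dist v w ≤ (p.dropUntil v hmem).length :=
        SimpleGraph.dist_le _
      have h3 : (p.takeUntil v hmem).length + (p.dropUntil v hmem).length = p.length := by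
        rw [← SimpleGraph.Walk.length_append, SimpleGraph.Walk.take_spec]
      have h4 : G.dist v w = 1 := SimpleGraph.dist_eq_one_iff_adj.mpr hvw
      omega
    refine ⟨SimpleGraph.Walk.cons hvw p.reverse, ?_, ?_⟩
    · rw [SimpleGraph.Walk.cons_isPath_iff]
      refine ⟨(SimpleGraph.Walk.isPath_reverse_iff p).mpr hp, ?_⟩
      rw [SimpleGraph.Walk.support_reverse, List.mem_reverse]
      exact hvns
    · rw [SimpleGraph.Walk.getVert_cons_succ, SimpleGraph.Walk.getVert_zero]
  obtain ⟨qa, hqa, hga⟩ := build a hva hdista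
  obtain ⟨qb, hqb, hgb⟩ := build b hvb hdistb
  have : (⟨qa, hqa⟩ : G.Path v r) = ⟨qb, hqb⟩ := hG.path_unique _ _
  have hw : qa = qb := congrArg Subtype.val this
  rw [← hga, ← hgb, hw]

lemma children_subset {V : Type*} [Fintype V] (G : SimpleGraph V) (rt : V → V) (v : V) :
    childrenF G rt v ⊆ G.neighborFinset v := by
  intro w hw
  simp only [childrenF, Finset.mem_filter] at hw
  rw [SimpleGraph.mem_neighborFinset]
  exact hw.2.1

lemma bal_children_le_one {V : Type*} [Fintype V] (G : SimpleGraph V) (rt : V → V)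
    (φ : V → Fin 2) (h : ∀ A ∈ classesF G rt, bal φ A ≤ 1) (v : V) :
    bal φ (childrenF G rt v) ≤ 1 := by
  by_cases hne : (childrenF G rt v).Nonempty
  · exact h _ (Or.inr ⟨v, rfl, hne⟩)
  · rw [Finset.not_nonempty_iff_eq_empty] at hne
    rw [hne]
    simp [bal]

/-- If `φ` is a 2-colouring of the edges of `H(G₁,G₂)` (identified with `V` via `ξ`) that is
balanced (difference ≤ 1) at every class-vertex of `H`, then the induced vertex 2-partition
`F = φ ∘ ξ` is simultaneously 2-locally-balanced for `G₁` and `G₂`. -/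
theorem induced_partition_two_locally_balanced {V : Type*} [Fintype V]
    (G₁ G₂ : SimpleGraph V) (h₁ : G₁.IsAcyclic) (h₂ : G₂.IsAcyclic)
    (rt₁ rt₂ : V → V)
    (hr₁ : ∀ v, G₁.Reachable v (rt₁ v)) (hc₁ : ∀ v w, G₁.Reachable v w → rt₁ v = rt₁ w)
    (hr₂ : ∀ v, G₂.Reachable v (rt₂ v)) (hc₂ : ∀ v w, G₂.Reachable v w → rt₂ v = rt₂ w)
    (φ : V → Fin 2)
    (hφ : ∀ A ∈ classesF G₁ rt₁ ∪ classesF G₂ rt₂, bal φ A ≤ 1) :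
    ∀ v : V, bal φ (G₁.neighborFinset v) ≤ 2 ∧ bal φ (G₂.neighborFinset v) ≤ 2 := by
  classical
  have main : ∀ (G : SimpleGraph V) (hG : G.IsAcyclic) (rt : V → V),
      (∀ v, G.Reachable v (rt v)) → (∀ v w, G.Reachable v w → rt v = rt w) →
      (∀ A ∈ classesF G rt, bal φ A ≤ 1) →
      ∀ v : V, bal φ (G.neighborFinset v) ≤ 2 := by
    intro G hG rt hr hc hA v
    calc bal φ (G.neighborFinset v)
        ≤ bal φ (childrenF G rt v) + (G.neighborFinset v \ childrenF G rt v).card :=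
          bal_le_of_subset φ (children_subset G rt v)
      _ ≤ 1 + 1 := by
          gcongr
          · exact bal_children_le_one G rt φ hA v
          · exact card_nonchild_le_one G hG rt hr hc v
      _ = 2 := rfl
  intro v
  exact ⟨main G₁ h₁ rt₁ hr₁ hc₁ (fun A hA => hφ A (Or.inl hA)) v,
         main G₂ h₂ rt₂ hr₂ hc₂ (fun A hA => hφ A (Or.inr hA)) v⟩
end

section
/- Every path graph P_n (and more generally every forest G) admits a 2-partition f of its vertex set with b_f(γ_G(v)) ≤ 1 for every vertex v; i.e., taking G₁ = G₂ = G, the simultaneous locally-balanced constant can be improved from 2 to 1 when the two forests coincide. -/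
/-!
Induction on the forest: cut off a leaf `x`, with neighbour `u`, by deleting its edge, and
balance the smaller forest. The colouring stays balanced at every vertex other than `x` and `u`;
`x` has a single neighbour; and at `u` it suffices to give `x` the colour that is in the
minority (either colour at a tie) among the other neighbours of `u`.
-/

open scoped Classical

section Balance

variable {α : Type*} (f : α → Fin 2) (S : Finset α)

lemma bal_le_card : bal f S ≤ S.card := by
  have h : (S.filter fun x => f x = 1).card + (S.filter fun x => f x = 0).card = S.card := by
    rw [← S.card_filter_add_card_filter_not fun x => f x = 1]
    congr 2
    exact Finset.filter_congr fun x _ => by omega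
  unfold bal
  omega

variable {f S} {x : α}

lemma filter_update_eq_of_notMem (hx : x ∉ S) (c i : Fin 2) :
    S.filter (fun y => Function.update f x c y = i) = S.filter fun y => f y = i :=
  Finset.filter_congr fun y hy => by rw [Function.update_of_ne (ne_of_mem_of_not_mem hy hx)]

lemma bal_update_of_notMem (hx : x ∉ S) (c : Fin 2) :
    bal (Function.update f x c) S = bal f S := by
  simp only [bal, filter_update_eq_of_notMem hx]

lemma card_filter_update_insert (hx : x ∉ S) (c i : Fin 2) :
    ((insert x S).filter fun y => Function.update f x c y = i).card =
      (S.filter fun y => f y = i).card + if c = i then 1 else 0 := by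
  rw [Finset.filter_insert, Function.update_self, filter_update_eq_of_notMem hx]
  split_ifs
  · exact Finset.card_insert_of_notMem fun hx' => hx (Finset.mem_filter.mp hx').1
  · rfl

lemma exists_bal_update_insert_le_one (hx : x ∉ S) (hS : bal f S ≤ 1) :
    ∃ c, bal (Function.update f x c) (insert x S) ≤ 1 := by
  refine ⟨if (S.filter fun y => f y = 1).card ≤ (S.filter fun y => f y = 0).card then 1 else 0, ?_⟩
  simp only [bal] at hS ⊢
  simp only [card_filter_update_insert hx]
  split_ifs <;> omega

end Balance

namespace SimpleGraph

variable {V : Type*} {G : SimpleGraph V}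

theorem IsAcyclic.exists_degree_eq_one [Fintype V] (hG : G.IsAcyclic) (hne : G ≠ ⊥) :
    ∃ v, G.degree v = 1 := by
  obtain ⟨a, b, hab⟩ : ∃ a b, G.Adj a b := by simpa [eq_bot_iff_forall_not_adj] using hne
  have : Nonempty V := ⟨a⟩
  obtain ⟨u, v, p, hp, hmax⟩ := Walk.exists_isPath_forall_isPath_length_le_length G
  have hnil : ¬p.Nil := fun hp0 => by
    have : 1 ≤ p.length := hmax _ _ _ (Walk.IsPath.of_adj hab)
    rw [← Walk.length_eq_zero_iff] at hp0
    omega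
  refine ⟨u, degree_eq_one_iff_existsUnique_adj.mpr
    ⟨_, p.adj_snd hnil, fun w hadj => hG.eq_snd_of_adj_start hp hadj ?_⟩⟩
  by_contra hw
  have := hmax _ _ _ (hp.cons hw (h := hadj.symm))
  simp at this

lemma deleteIncidenceSet_lt_of_adj {x u : V} (h : G.Adj x u) : G.deleteIncidenceSet x < G :=
  lt_of_le_of_ne (G.deleteIncidenceSet_le x) fun heq => by
    rw [← heq] at h
    simp [deleteIncidenceSet_adj] at h

lemma neighborFinset_deleteIncidenceSet [DecidableEq V] {x v : V} [Fintype (G.neighborSet v)]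
    [Fintype ((G.deleteIncidenceSet x).neighborSet v)] (hv : v ≠ x) :
    (G.deleteIncidenceSet x).neighborFinset v = (G.neighborFinset v).erase x := by
  ext w
  simp [deleteIncidenceSet_adj, hv, and_comm]

theorem exists_update_balanced_of_degree_le_one [Fintype V] {x : V} (hx : G.degree x ≤ 1)
    {f : V → Fin 2} (hf : ∀ v ≠ x, bal f ((G.neighborFinset v).erase x) ≤ 1) :
    ∃ c, ∀ v, bal (Function.update f x c) (G.neighborFinset v) ≤ 1 := by
  obtain ⟨c, hc⟩ : ∃ c, ∀ u, G.Adj x u → bal (Function.update f x c) (G.neighborFinset u) ≤ 1 := by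
    by_cases hu : ∃ u, G.Adj x u
    · obtain ⟨u, hxu⟩ := hu
      obtain ⟨c, hc⟩ := exists_bal_update_insert_le_one (Finset.notMem_erase x _) (hf u hxu.ne')
      rw [Finset.insert_erase (by simpa using hxu.symm)] at hc
      refine ⟨c, fun w hxw => ?_⟩
      obtain rfl : w = u := Finset.card_le_one.mp hx _ (by simpa) _ (by simpa)
      exact hc
    · exact ⟨0, fun u hxu => (hu ⟨u, hxu⟩).elim⟩
  refine ⟨c, fun v => ?_⟩
  by_cases hvx : v = x
  · subst hvx
    exact (bal_le_card _ _).trans hx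
  by_cases hxv : G.Adj x v
  · exact hc v hxv
  have hx' : x ∉ G.neighborFinset v := by simpa using fun h => hxv h.symm
  rw [bal_update_of_notMem hx', ← Finset.erase_eq_of_notMem hx']
  exact hf v hvx

end SimpleGraph

open SimpleGraph

/-- Every finite forest (in particular every path) admits a 1-locally-balanced
2-partition of its vertex set. -/
theorem forest_one_locally_balanced {V : Type*} [Fintype V]
    (G : SimpleGraph V) (h : G.IsAcyclic) :
    ∃ f : V → Fin 2, ∀ v : V, bal f (G.neighborFinset v) ≤ 1 := by
  induction G using WellFoundedLT.induction with
  | ind G ih =>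
    by_cases hbot : G = ⊥
    · subst hbot
      exact ⟨0, fun v => (bal_le_card _ _).trans (by simp)⟩
    obtain ⟨x, hx⟩ := h.exists_degree_eq_one hbot
    obtain ⟨u, hxu, -⟩ := degree_eq_one_iff_existsUnique_adj.mp hx
    obtain ⟨f, hf⟩ := ih _ (deleteIncidenceSet_lt_of_adj hxu) (h.anti (G.deleteIncidenceSet_le x))
    obtain ⟨c, hc⟩ := exists_update_balanced_of_degree_le_one hx.le fun v hv => by
      simpa only [neighborFinset_deleteIncidenceSet hv] using hf v
    exact ⟨_, hc⟩
end
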